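/- arXiv:2109.05286 — 4 statements merged into one kernel-verified Lean document; each statement's English description precedes it below -/
import Mathlib

section
/- Osgood's lemma: if η : [0,T] → [0,∞) is continuous, a ≥ 0, L ≥ 0, η(t) ≤ a + L ∫₀ᵗ φ(η(s)) ds for all t ∈ [0,T] with φ(r) = r(1 - ln r) for 0 < r ≤ 1, and if 0 < a < 1 and η(t) < 1 on [0,T], then η(t) ≤ e^{1 - exp(-L t)} a^{exp(-L t)} for all t ∈ [0,T]. -/
/-!
Put `F t = a + L ∫₀ᵗ φ(η)`, so `η ≤ F`. Since `φ` is increasing on `[0, 1]`, as long as `F ≤ 1`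
we get `F' = L φ(η) ≤ L φ(F)`, and `(log F - 1) e^{L t}`, which is constant along solutions of
`y' = L φ(y)`, is nonincreasing; this is the claimed bound, whose right-hand side is
`exp (1 + (log a - 1) e^{-L t})`. Once `F` exceeds `1` the bound is already `≥ 1 > η`.
-/

open Real Set

lemma continuous_mul_one_sub_log : Continuous fun r : ℝ => r * (1 - log r) :=
  (continuous_id.sub continuous_mul_log).congr fun r => by simp only [Pi.sub_apply, id]; ring

lemma hasDerivAt_mul_one_sub_log {x : ℝ} (hx : 0 < x) :
    HasDerivAt (fun r => r * (1 - log r)) (-log x) x := by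
  have h : HasDerivAt (fun r => r - r * log r) (1 - (log x + 1)) x :=
    (hasDerivAt_id' x).sub (hasDerivAt_mul_log hx.ne')
  simpa only [mul_one_sub, mul_one] using h.congr_deriv (by ring)

lemma mul_one_sub_log_nonneg {r : ℝ} (h0 : 0 ≤ r) (h1 : r ≤ 1) : 0 ≤ r * (1 - log r) :=
  mul_nonneg h0 (sub_nonneg.2 ((log_nonpos h0 h1).trans zero_le_one))

lemma monotoneOn_mul_one_sub_log : MonotoneOn (fun r : ℝ => r * (1 - log r)) (Icc 0 1) := by
  refine monotoneOn_of_deriv_nonneg (convex_Icc 0 1) continuous_mul_one_sub_log.continuousOn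
    (fun x hx => ?_) (fun x hx => ?_) <;> rw [interior_Icc] at hx
  · exact (hasDerivAt_mul_one_sub_log hx.1).differentiableAt.differentiableWithinAt
  · rw [(hasDerivAt_mul_one_sub_log hx.1).deriv]
    exact neg_nonneg.2 (log_nonpos hx.1.le hx.2.le)

lemma antitoneOn_log_sub_one_mul_exp {F F' : ℝ → ℝ} {L a b : ℝ}
    (hF : ∀ s ∈ Icc a b, HasDerivAt F (F' s) s) (hpos : ∀ s ∈ Icc a b, 0 < F s)
    (hle : ∀ s ∈ Ioo a b, F' s ≤ L * (F s * (1 - log (F s)))) :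
    AntitoneOn (fun s => (log (F s) - 1) * exp (L * s)) (Icc a b) := by
  have hw : ∀ s ∈ Icc a b, HasDerivAt (fun s => (log (F s) - 1) * exp (L * s))
      ((F' s / F s + L * (log (F s) - 1)) * exp (L * s)) s := fun s hs =>
    ((((hF s hs).log (hpos s hs).ne').sub_const 1).fun_mul
      ((hasDerivAt_id' s).const_mul L).exp).congr_deriv (by ring)
  refine antitoneOn_of_deriv_nonpos (convex_Icc a b)
    (fun s hs => (hw s hs).continuousAt.continuousWithinAt) (fun s hs => ?_) (fun s hs => ?_) <;>
    rw [interior_Icc] at hs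
  · exact (hw s (Ioo_subset_Icc_self hs)).differentiableAt.differentiableWithinAt
  · rw [(hw s (Ioo_subset_Icc_self hs)).deriv]
    have hFs := hpos s (Ioo_subset_Icc_self hs)
    have hdiv : F' s / F s ≤ L * (1 - log (F s)) := by
      rw [div_le_iff₀ hFs]
      linarith [hle s hs]
    exact mul_nonpos_of_nonpos_of_nonneg (by linarith) (exp_pos _).le

lemma le_exp_one_add_mul_exp_of_hasDerivAt_le {F F' : ℝ → ℝ} {L t : ℝ} (ht : 0 ≤ t)
    (hF : ∀ s ∈ Icc 0 t, HasDerivAt F (F' s) s) (hpos : ∀ s ∈ Icc 0 t, 0 < F s)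
    (hle : ∀ s ∈ Ioo 0 t, F' s ≤ L * (F s * (1 - log (F s)))) :
    F t ≤ exp (1 + (log (F 0) - 1) * exp (-L * t)) := by
  have h := antitoneOn_log_sub_one_mul_exp hF hpos hle (left_mem_Icc.2 ht) (right_mem_Icc.2 ht) ht
  simp only [mul_zero, exp_zero, mul_one] at h
  have h' : log (F t) - 1 ≤ (log (F 0) - 1) * exp (-L * t) := by
    rwa [neg_mul, exp_neg, ← div_eq_mul_inv, le_div_iff₀ (exp_pos _)]
  rw [← exp_log (hpos t (right_mem_Icc.2 ht))]
  gcongr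
  linarith

lemma exp_one_sub_mul_rpow {a : ℝ} (ha : 0 < a) (x : ℝ) :
    exp (1 - x) * a ^ x = exp (1 + (log a - 1) * x) := by
  rw [rpow_def_of_pos ha, ← exp_add]
  ring_nf

lemma monotone_exp_one_add_mul_exp_neg_mul {c L : ℝ} (hc : c ≤ 0) (hL : 0 ≤ L) :
    Monotone fun t => exp (1 + c * exp (-L * t)) := by
  intro s t hst
  have h : exp (-L * t) ≤ exp (-L * s) := exp_le_exp.2 (by nlinarith)
  exact exp_le_exp.2 (by nlinarith)

lemma le_of_forall_le_one_imp_le {F B : ℝ → ℝ} {x t : ℝ} (ht : 0 ≤ t)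
    (hF : ContinuousOn F (Icc 0 t)) (hF0 : F 0 ≤ 1) (hB : Monotone B)
    (hFB : ∀ s ∈ Icc 0 t, F s ≤ 1 → F s ≤ B s) (hxF : x ≤ F t) (hx1 : x ≤ 1) : x ≤ B t := by
  rcases le_or_gt (F t) 1 with h | h
  · exact hxF.trans (hFB t (right_mem_Icc.2 ht) h)
  · obtain ⟨s, hs, hFs⟩ := intermediate_value_Icc ht hF ⟨hF0, h.le⟩
    calc x ≤ 1 := hx1
      _ = F s := hFs.symm
      _ ≤ B s := hFB s hs hFs.le
      _ ≤ B t := hB hs.2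

theorem osgood_of_continuous {u : ℝ → ℝ} {T a L : ℝ} (hu : Continuous u)
    (hu0 : ∀ t ∈ Icc 0 T, 0 ≤ u t) (hu1 : ∀ t ∈ Icc 0 T, u t < 1)
    (ha0 : 0 < a) (ha1 : a < 1) (hL : 0 ≤ L)
    (hineq : ∀ t ∈ Icc 0 T, u t ≤ a + L * ∫ s in (0 : ℝ)..t, u s * (1 - log (u s))) :
    ∀ t ∈ Icc 0 T, u t ≤ exp (1 + (log a - 1) * exp (-L * t)) := by
  set F := fun t => a + L * ∫ s in (0 : ℝ)..t, u s * (1 - log (u s))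
  have hF : ∀ t, HasDerivAt F (L * (u t * (1 - log (u t)))) t := fun t =>
    (((continuous_mul_one_sub_log.comp hu).integral_hasStrictDerivAt 0 t).hasDerivAt.const_mul
      L).const_add a
  have hF0 : F 0 = a := by simp [F]
  have hF_mono : MonotoneOn F (Icc 0 T) := by
    refine monotoneOn_of_deriv_nonneg (convex_Icc 0 T)
      (fun t _ => (hF t).continuousAt.continuousWithinAt)
      (fun t _ => (hF t).differentiableAt.differentiableWithinAt) (fun t ht => ?_)
    rw [interior_Icc] at ht
    rw [(hF t).deriv]
    exact mul_nonneg hL (mul_one_sub_log_nonneg (hu0 t (Ioo_subset_Icc_self ht))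
      (hu1 t (Ioo_subset_Icc_self ht)).le)
  have hF_pos : ∀ t ∈ Icc 0 T, 0 < F t := fun t ht =>
    ha0.trans_le (hF0 ▸ hF_mono (left_mem_Icc.2 (ht.1.trans ht.2)) ht ht.1)
  intro t ht
  refine le_of_forall_le_one_imp_le (B := fun t => exp (1 + (log a - 1) * exp (-L * t))) ht.1
    (fun s _ => (hF s).continuousAt.continuousWithinAt)
    (hF0 ▸ ha1.le) (monotone_exp_one_add_mul_exp_neg_mul (by linarith [log_neg ha0 ha1]) hL)
    (fun s hs hFs1 => ?_) (hineq t ht) (hu1 t ht).le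
  have hsT : Icc 0 s ⊆ Icc 0 T := Icc_subset_Icc_right (hs.2.trans ht.2)
  rw [← hF0]
  refine le_exp_one_add_mul_exp_of_hasDerivAt_le hs.1 (fun r _ => hF r)
    (fun r hr => hF_pos r (hsT hr)) (fun r hrs => ?_)
  have hr := hsT (Ioo_subset_Icc_self hrs)
  have hFr1 : F r ≤ 1 := (hF_mono hr (hsT (right_mem_Icc.2 hs.1)) hrs.2.le).trans hFs1
  exact mul_le_mul_of_nonneg_left (monotoneOn_mul_one_sub_log ⟨hu0 r hr, (hu1 r hr).le⟩
    ⟨(hF_pos r hr).le, hFr1⟩ (hineq r hr)) hL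

theorem osgood_lemma (φ : ℝ → ℝ) (hφ0 : φ 0 = 0)
    (hφ : ∀ r : ℝ, 0 < r → r ≤ 1 → φ r = r * (1 - Real.log r))
    (T : ℝ) (hT : 0 ≤ T) (η : ℝ → ℝ) (hcont : ContinuousOn η (Set.Icc 0 T))
    (hnonneg : ∀ t ∈ Set.Icc 0 T, 0 ≤ η t)
    (a L : ℝ) (ha0 : 0 < a) (ha1 : a < 1) (hL : 0 ≤ L)
    (hlt1 : ∀ t ∈ Set.Icc 0 T, η t < 1)
    (hineq : ∀ t ∈ Set.Icc 0 T, η t ≤ a + L * ∫ s in (0 : ℝ)..t, φ (η s)) :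
    ∀ t ∈ Set.Icc 0 T,
      η t ≤ Real.exp (1 - Real.exp (-L * t)) * a ^ Real.exp (-L * t) := by
  set u : ℝ → ℝ := fun s => η (projIcc 0 T hT s)
  have hu : Continuous u :=
    hcont.comp_continuous (continuous_subtype_val.comp continuous_projIcc) fun s =>
      (projIcc 0 T hT s).2
  have hu_eq : EqOn u η (Icc 0 T) := fun s hs => by simp [u, projIcc_of_mem hT hs]
  have hφ_eq : EqOn (fun s => φ (η s)) (fun s => u s * (1 - log (u s))) (Icc 0 T) := by
    intro s hs
    rcases (hnonneg s hs).eq_or_lt with h | h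
    · simp [hu_eq hs, ← h, hφ0]
    · simp [hu_eq hs, hφ _ h (hlt1 s hs).le]
  intro t ht
  rw [exp_one_sub_mul_rpow ha0, ← hu_eq ht]
  refine osgood_of_continuous hu (fun s hs => hu_eq hs ▸ hnonneg s hs)
    (fun s hs => hu_eq hs ▸ hlt1 s hs) ha0 ha1 hL (fun s hs => ?_) t ht
  rw [hu_eq hs, ← intervalIntegral.integral_congr (hφ_eq.mono ?_)]
  · exact hineq s hs
  · rw [uIcc_of_le hs.1]
    exact Icc_subset_Icc_right hs.2
end

section
/- Let u : ℝ² × ℝ → ℝ² be continuous, bounded, and Log-Lipschitz in space uniformly in time: |u(x,t) − u(y,t)| ≤ M φ(|x−y|) where φ(r) = r(1 − ln r) for 0 < r ≤ 1, φ(r) = 1 for r > 1. Then for every (s, x), the ODE dX/dt = u(X, t), X(s) = x has a unique solution defined on all of ℝ. -/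
/-!
The modulus `ψ(r) = r (1 - log r)` satisfies Osgood's condition in the following explicit form:
the solution of `r' = K ψ(r)`, `r(0) = r₀`, is `e ^ (1 - c) r₀ ^ c` with `c = e ^ (-K t)`, and it
tends to `0` with `r₀`, uniformly for `t` in a bounded interval. Comparing `‖X - Y‖` with this
barrier shows that two solutions agreeing at time `s` agree at all later times. Existence comes
from the delayed equations `Y' = u (Y (t - h)) t`, which are solved by stepping forward in time:
the distance between the solutions for delays `h₁, h₂` is governed by the same barrier started at
`A (h₁ + h₂)`, so they converge as `h → 0`, and the limit solves the equation forward in time.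
Backward in time, apply all this to `(y, t) ↦ -u y (-t)`.
-/

open Set Filter Topology

namespace LogLipschitzFlow

noncomputable def logModulus (r : ℝ) : ℝ := r * (1 - Real.log r)

lemma logModulus_pos {r : ℝ} (h0 : 0 < r) (h1 : r ≤ 1) : 0 < logModulus r :=
  mul_pos h0 (by linarith [Real.log_nonpos h0.le h1])

lemma logModulus_le_logModulus {r e : ℝ} (hr : 0 < r) (hre : r ≤ e) (he : e ≤ 1) :
    logModulus r ≤ logModulus e := by
  have he0 : 0 < e := hr.trans_le hre
  have hlog : Real.log e - Real.log r ≤ e / r - 1 := by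
    rw [← Real.log_div he0.ne' hr.ne']
    exact Real.log_le_sub_one_of_pos (by positivity)
  have h : r * (Real.log e - Real.log r) ≤ e - r := by
    calc r * (Real.log e - Real.log r) ≤ r * (e / r - 1) := by gcongr
      _ = e - r := by field_simp
  unfold logModulus
  nlinarith [Real.log_nonpos he0.le he]

/-- For `0 < r₀`, the solution `e ^ (1 - c) * r₀ ^ c`, `c = exp (-K τ)`, of
`r' = K * logModulus r`, `r 0 = r₀`. -/
noncomputable def osgoodBarrier (K r₀ τ : ℝ) : ℝ :=
  Real.exp (1 - (1 - Real.log r₀) * Real.exp (-(K * τ)))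

lemma osgoodBarrier_pos (K r₀ τ : ℝ) : 0 < osgoodBarrier K r₀ τ := Real.exp_pos _

lemma osgoodBarrier_zero (K : ℝ) {r₀ : ℝ} (hr₀ : 0 < r₀) : osgoodBarrier K r₀ 0 = r₀ := by
  simp [osgoodBarrier, Real.exp_log hr₀]

lemma hasDerivAt_osgoodBarrier (K r₀ τ : ℝ) :
    HasDerivAt (osgoodBarrier K r₀) (K * logModulus (osgoodBarrier K r₀ τ)) τ := by
  have h := ((((hasDerivAt_id τ).const_mul K).neg.exp).const_mul (1 - Real.log r₀)).const_sub 1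
  convert h.exp using 1
  · rfl
  simp only [logModulus, osgoodBarrier, Real.log_exp, Pi.neg_apply, id]
  ring

lemma osgoodBarrier_mono {K r₀ : ℝ} (hK : 0 ≤ K) (hr₀ : 0 ≤ r₀) (hr₀1 : r₀ ≤ 1) :
    Monotone (osgoodBarrier K r₀) := by
  intro τ τ' hτ
  have := Real.log_nonpos hr₀ hr₀1
  unfold osgoodBarrier
  gcongr
  linarith

lemma tendsto_osgoodBarrier (K τ : ℝ) :
    Tendsto (fun r₀ => osgoodBarrier K r₀ τ) (𝓝[>] 0) (𝓝 0) := by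
  have hc : 0 < Real.exp (-(K * τ)) := Real.exp_pos _
  have h : Tendsto (fun r₀ => 1 - Real.exp (-(K * τ)) + Real.exp (-(K * τ)) * Real.log r₀)
      (𝓝[>] 0) atBot :=
    tendsto_atBot_add_const_left _ _ (Real.tendsto_log_nhdsGT_zero.const_mul_atBot hc)
  refine Real.tendsto_exp_atBot.comp (h.congr fun r₀ => ?_)
  ring

variable {E : Type*} [NormedAddCommGroup E]

def LogLipschitzWith (M : ℝ) (u : E → ℝ → E) : Prop :=
  ∀ t p q e, 0 < e → e ≤ 1 → ‖p - q‖ ≤ e → ‖u p t - u q t‖ ≤ M * logModulus e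

theorem logLipschitzWith_of_norm_sub_le {φ : ℝ → ℝ}
    (hφ : ∀ r : ℝ, 0 < r → r ≤ 1 → φ r = r * (1 - Real.log r)) {u : E → ℝ → E} {M : ℝ}
    (hu : ∀ x y t, ‖u x t - u y t‖ ≤ M * φ ‖x - y‖) : LogLipschitzWith (max M 0) u := by
  intro t p q e he0 he1 hpq
  have hψe := (logModulus_pos he0 he1).le
  rcases (norm_nonneg (p - q)).eq_or_lt with hpq0 | hpq0
  · rw [eq_comm, norm_eq_zero, sub_eq_zero] at hpq0
    simpa [hpq0] using mul_nonneg (le_max_right M 0) hψe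
  calc ‖u p t - u q t‖ ≤ M * φ ‖p - q‖ := hu p q t
    _ = M * logModulus ‖p - q‖ := by rw [hφ _ hpq0 (hpq.trans he1), logModulus]
    _ ≤ max M 0 * logModulus ‖p - q‖ :=
      mul_le_mul_of_nonneg_right (le_max_left M 0) (logModulus_pos hpq0 (hpq.trans he1)).le
    _ ≤ max M 0 * logModulus e :=
      mul_le_mul_of_nonneg_left (logModulus_le_logModulus hpq0 hpq he1) (le_max_right M 0)

def timeReversal (u : E → ℝ → E) : E → ℝ → E := fun y t => -u y (-t)

section

variable {u : E → ℝ → E}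

lemma continuous_timeReversal (hu : Continuous (Function.uncurry u)) :
    Continuous (Function.uncurry (timeReversal u)) :=
  (hu.comp₂ continuous_fst continuous_snd.neg).neg

lemma norm_timeReversal_le {A : ℝ} (hA : ∀ y t, ‖u y t‖ ≤ A) (y : E) (t : ℝ) :
    ‖timeReversal u y t‖ ≤ A := by
  simpa [timeReversal] using hA y (-t)

lemma LogLipschitzWith.timeReversal {M : ℝ} (hLL : LogLipschitzWith M u) :
    LogLipschitzWith M (timeReversal u) := fun t p q e he0 he1 hpq => by
  show ‖-u p (-t) - -u q (-t)‖ ≤ _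
  rw [neg_sub_neg, norm_sub_rev]
  exact hLL (-t) p q e he0 he1 hpq

end

variable [NormedSpace ℝ E]

theorem norm_add_le_osgoodBarrier {f f' : ℝ → E} {M K δ r₀ s T : ℝ} (hM : 0 ≤ M) (hMK : M < K)
    (hr₀ : 0 < r₀) (hr₀1 : r₀ ≤ 1) (hT : osgoodBarrier K r₀ (T - s) ≤ 1)
    (hf : ContinuousOn f (Icc s T)) (hf' : ∀ t ∈ Ico s T, HasDerivWithinAt f (f' t) (Ici t) t)
    (hbound : ∀ t ∈ Ico s T, 0 < ‖f t‖ + δ → ‖f t‖ + δ ≤ 1 →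
      ‖f' t‖ ≤ M * logModulus (‖f t‖ + δ))
    (hs : ‖f s‖ + δ ≤ r₀) {t : ℝ} (ht : t ∈ Icc s T) :
    ‖f t‖ + δ ≤ osgoodBarrier K r₀ (t - s) := by
  have hB : ∀ t, HasDerivAt (fun t => osgoodBarrier K r₀ (t - s) - δ)
      (K * logModulus (osgoodBarrier K r₀ (t - s))) t := fun t =>
    ((hasDerivAt_osgoodBarrier K r₀ (t - s)).comp_sub_const t s).sub_const δ
  suffices ‖f t‖ ≤ osgoodBarrier K r₀ (t - s) - δ by linarith
  refine image_norm_le_of_norm_deriv_right_lt_deriv_boundary hf hf'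
    (by simp only [sub_self, osgoodBarrier_zero K hr₀]; linarith) hB (fun τ hτ hcontact => ?_) ht
  rw [eq_sub_iff_add_eq] at hcontact
  have hBτ : osgoodBarrier K r₀ (τ - s) ≤ 1 :=
    (osgoodBarrier_mono (hM.trans hMK.le) hr₀.le hr₀1 (by linarith [hτ.2])).trans hT
  have hBpos := osgoodBarrier_pos K r₀ (τ - s)
  calc ‖f' τ‖ ≤ M * logModulus (‖f τ‖ + δ) :=
        hbound τ hτ (hcontact ▸ hBpos) (hcontact ▸ hBτ)
    _ < K * logModulus (osgoodBarrier K r₀ (τ - s)) := by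
        rw [hcontact]
        exact mul_lt_mul_of_pos_right hMK (logModulus_pos hBpos hBτ)

theorem exists_pos_norm_add_le_of_osgood {M s T ε : ℝ} (hM : 0 ≤ M) (hsT : s ≤ T) (hε : 0 < ε) :
    ∃ η > 0, ∀ {f f' : ℝ → E} {δ : ℝ}, ContinuousOn f (Icc s T) →
      (∀ t ∈ Ico s T, HasDerivWithinAt f (f' t) (Ici t) t) →
      (∀ t ∈ Ico s T, 0 < ‖f t‖ + δ → ‖f t‖ + δ ≤ 1 → ‖f' t‖ ≤ M * logModulus (‖f t‖ + δ)) →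
      ‖f s‖ + δ ≤ η → ‖f T‖ + δ ≤ ε := by
  obtain ⟨η, hB, hη⟩ := (((tendsto_osgoodBarrier (M + 1) (T - s)).eventually
    (gt_mem_nhds (lt_min hε one_pos))).and (Ioc_mem_nhdsGT one_pos)).exists
  rw [lt_min_iff] at hB
  refine ⟨η, hη.1, fun hf hf' hbound hs => ?_⟩
  exact (norm_add_le_osgoodBarrier hM (lt_add_one M) hη.1 hη.2 hB.2.le hf hf' hbound hs
    ⟨hsT, le_rfl⟩).trans hB.1.le

section Uniqueness

variable {u : E → ℝ → E} {M : ℝ}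

lemma hasDerivAt_timeReversal {X : ℝ → E} (hX : ∀ t, HasDerivAt X (u (X t) t) t) (t : ℝ) :
    HasDerivAt (fun t => X (-t)) (timeReversal u (X (-t)) t) t := by
  simpa [timeReversal, Function.comp_def] using (hX (-t)).scomp t (hasDerivAt_neg t)

theorem eq_of_hasDerivAt_of_le (hM : 0 ≤ M) (hLL : LogLipschitzWith M u) {X Y : ℝ → E}
    (hX : ∀ t, HasDerivAt X (u (X t) t) t) (hY : ∀ t, HasDerivAt Y (u (Y t) t) t) {s : ℝ}
    (hs : X s = Y s) {t : ℝ} (hst : s ≤ t) : X t = Y t := by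
  rw [← sub_eq_zero, ← norm_le_zero_iff]
  refine le_of_forall_pos_le_add fun ε hε => ?_
  obtain ⟨η, hη, hsmall⟩ := exists_pos_norm_add_le_of_osgood (E := E) hM hst hε
  simpa using hsmall (f := X - Y) (δ := 0)
    (fun τ _ => ((hX τ).continuousAt.sub (hY τ).continuousAt).continuousWithinAt)
    (fun τ _ => ((hX τ).sub (hY τ)).hasDerivWithinAt)
    (fun τ _ h0 h1 => by simpa using hLL τ _ _ _ (by simpa using h0) (by simpa using h1) le_rfl)
    (by simpa [hs] using hη.le)

theorem eq_of_hasDerivAt (hM : 0 ≤ M) (hLL : LogLipschitzWith M u) {X Y : ℝ → E}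
    (hX : ∀ t, HasDerivAt X (u (X t) t) t) (hY : ∀ t, HasDerivAt Y (u (Y t) t) t) {s : ℝ}
    (hs : X s = Y s) : X = Y := by
  funext t
  rcases le_total s t with hst | hts
  · exact eq_of_hasDerivAt_of_le hM hLL hX hY hs hst
  · simpa using eq_of_hasDerivAt_of_le hM hLL.timeReversal (hasDerivAt_timeReversal hX)
      (hasDerivAt_timeReversal hY) (by simpa using hs) (neg_le_neg hts)

end Uniqueness

/-- `Y' = u (Y (t - h)) t` for `t ≥ s`, and `Y = x` on `(-∞, s]`. -/
structure IsDelayedSolution (u : E → ℝ → E) (s : ℝ) (x : E) (h : ℝ) (Y : ℝ → E) : Prop where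
  continuous : Continuous Y
  eq_integral : ∀ t, Y t = x + ∫ τ in s..max s t, u (Y (τ - h)) τ

namespace IsDelayedSolution

variable {u : E → ℝ → E} {s : ℝ} {x : E} {A : ℝ}

section

variable {h : ℝ} {Y : ℝ → E}

lemma eq_of_le (hY : IsDelayedSolution u s x h Y) {t : ℝ} (ht : t ≤ s) : Y t = x := by
  rw [hY.eq_integral, max_eq_left ht, intervalIntegral.integral_same, add_zero]

lemma eq_integral_of_le (hY : IsDelayedSolution u s x h Y) {t : ℝ} (ht : s ≤ t) :
    Y t = x + ∫ τ in s..t, u (Y (τ - h)) τ := by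
  rw [hY.eq_integral, max_eq_right ht]

lemma norm_sub_le (hY : IsDelayedSolution u s x h Y) (hA : ∀ y t, ‖u y t‖ ≤ A)
    (hu : Continuous (Function.uncurry u)) (t t' : ℝ) : ‖Y t - Y t'‖ ≤ A * |t - t'| := by
  have hg : Continuous fun τ => u (Y (τ - h)) τ :=
    hu.comp₂ (hY.continuous.comp (continuous_sub_right h)) continuous_id
  rw [hY.eq_integral t, hY.eq_integral t', add_sub_add_left_eq_sub,
    intervalIntegral.integral_interval_sub_left (hg.intervalIntegrable _ _)
      (hg.intervalIntegrable _ _)]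
  calc ‖∫ τ in max s t'..max s t, u (Y (τ - h)) τ‖ ≤ A * |max s t - max s t'| :=
        intervalIntegral.norm_integral_le_of_norm_le_const fun τ _ => hA _ τ
    _ ≤ A * |t - t'| := by
        rw [max_comm s t, max_comm s t']
        exact mul_le_mul_of_nonneg_left (abs_max_sub_max_le_abs t t' s)
          ((norm_nonneg _).trans (hA x s))

end

theorem of_tendsto (hu : Continuous (Function.uncurry u))
    (hA : ∀ y t, ‖u y t‖ ≤ A) {h : ℕ → ℝ} {Y : ℕ → ℝ → E} {X : ℝ → E}
    (hY : ∀ n, IsDelayedSolution u s x (h n) (Y n)) (hh : Tendsto h atTop (𝓝 0))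
    (hX : ∀ t, Tendsto (fun n => Y n t) atTop (𝓝 (X t))) : IsDelayedSolution u s x 0 X := by
  have hA0 : 0 ≤ A := (norm_nonneg _).trans (hA x s)
  have hXlip : LipschitzWith A.toNNReal X := LipschitzWith.of_dist_le_mul fun t t' => by
    rw [dist_eq_norm, Real.dist_eq, Real.coe_toNNReal A hA0]
    exact le_of_tendsto' ((hX t).sub (hX t')).norm fun n => (hY n).norm_sub_le hA hu t t'
  have hdelayed : ∀ τ, Tendsto (fun n => Y n (τ - h n)) atTop (𝓝 (X τ)) := fun τ => by
    have hshift : Tendsto (fun n => Y n (τ - h n) - Y n τ) atTop (𝓝 0) := by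
      refine squeeze_zero_norm (fun n => ?_) ((hh.abs.const_mul A).trans_eq (by simp))
      simpa using (hY n).norm_sub_le hA hu (τ - h n) τ
    simpa using hshift.add (hX τ)
  refine ⟨hXlip.continuous, fun t => tendsto_nhds_unique (hX t) ?_⟩
  simp_rw [(hY _).eq_integral t, sub_zero]
  refine tendsto_const_nhds.add (intervalIntegral.tendsto_integral_filter_of_dominated_convergence
    (fun _ => A) (Eventually.of_forall fun n => ?_) (Eventually.of_forall fun n => ?_)
    intervalIntegrable_const (MeasureTheory.ae_of_all _ fun τ _ => ?_))
  · exact (hu.comp₂ ((hY n).continuous.comp (continuous_sub_right _))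
      continuous_id).aestronglyMeasurable
  · exact MeasureTheory.ae_of_all _ fun τ _ => hA _ _
  · exact (hu.tendsto (X τ, τ)).comp ((hdelayed τ).prodMk_nhds tendsto_const_nhds)

end IsDelayedSolution

/-- The `k`-th iterate solves the delay equation on `(-∞, s + k h]`. -/
noncomputable def delayedPicard (u : E → ℝ → E) (s : ℝ) (x : E) (h : ℝ) : ℕ → ℝ → E
  | 0 => fun _ => x
  | k + 1 => fun t => x + ∫ τ in s..max s t, u (delayedPicard u s x h k (τ - h)) τ

section Picard

variable {u : E → ℝ → E} {s h : ℝ} {x : E}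

lemma delayedPicard_succ (k : ℕ) (t : ℝ) : delayedPicard u s x h (k + 1) t =
    x + ∫ τ in s..max s t, u (delayedPicard u s x h k (τ - h)) τ := rfl

lemma continuous_delayedPicard (hu : Continuous (Function.uncurry u)) :
    ∀ k, Continuous (delayedPicard u s x h k)
  | 0 => continuous_const
  | k + 1 => by
    have hg : Continuous fun τ => u (delayedPicard u s x h k (τ - h)) τ :=
      hu.comp₂ ((continuous_delayedPicard hu k).comp (continuous_sub_right h)) continuous_id
    exact continuous_const.add ((intervalIntegral.continuous_primitive
      (fun _ _ => hg.intervalIntegrable _ _) s).comp (continuous_const.max continuous_id))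

lemma delayedPicard_succ_eq (hh : 0 ≤ h) :
    ∀ k : ℕ, ∀ t ≤ s + k * h, delayedPicard u s x h (k + 1) t = delayedPicard u s x h k t
  | 0, t, ht => by
    simp only [Nat.cast_zero, zero_mul, add_zero] at ht
    simp [delayedPicard, max_eq_left ht]
  | k + 1, t, ht => by
    rw [delayedPicard_succ, delayedPicard_succ]
    congr 1
    refine intervalIntegral.integral_congr fun τ hτ => ?_
    rw [uIcc_of_le (le_max_left s t)] at hτ
    have hτk : τ - h ≤ s + k * h := by
      push_cast at ht
      have := hτ.2
      have := max_le (by nlinarith : s ≤ s + (k + 1) * h) ht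
      linarith
    simp only [delayedPicard_succ_eq hh k _ hτk]

lemma delayedPicard_eq_of_le (hh : 0 ≤ h) {j k : ℕ} (hkj : k ≤ j) {t : ℝ} (ht : t ≤ s + k * h) :
    delayedPicard u s x h j t = delayedPicard u s x h k t := by
  induction j, hkj using Nat.le_induction with
  | base => rfl
  | succ j hkj ih =>
    rw [delayedPicard_succ_eq hh j t (ht.trans (by gcongr)), ih]

theorem exists_isDelayedSolution (hu : Continuous (Function.uncurry u)) (hh : 0 < h) :
    ∃ Y, IsDelayedSolution u s x h Y := by
  set Y := fun t => delayedPicard u s x h ⌈(t - s) / h⌉₊ t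
  have hY : ∀ (k : ℕ) t, t ≤ s + k * h → Y t = delayedPicard u s x h k t := by
    intro k t ht
    show delayedPicard u s x h _ t = _
    have hceil : t ≤ s + ⌈(t - s) / h⌉₊ * h := by
      have := Nat.le_ceil ((t - s) / h)
      rw [div_le_iff₀ hh] at this
      linarith
    rw [← delayedPicard_eq_of_le hh.le (le_max_left _ k) hceil,
      delayedPicard_eq_of_le hh.le (le_max_right _ k) ht]
  refine ⟨Y, continuous_iff_continuousAt.2 fun t₀ => ?_, fun t => ?_⟩
  · obtain ⟨k, hk⟩ := exists_nat_gt ((t₀ - s) / h)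
    rw [div_lt_iff₀ hh] at hk
    refine ((continuous_delayedPicard (s := s) (x := x) (h := h) hu k).continuousAt).congr ?_
    filter_upwards [gt_mem_nhds (by linarith : t₀ < s + k * h)] with t ht
    exact (hY k t ht.le).symm
  · obtain ⟨k, hk⟩ := exists_nat_ge ((max s t - s) / h)
    rw [div_le_iff₀ hh] at hk
    rw [hY (k + 1) t (by push_cast; nlinarith [le_max_right s t])]
    rw [delayedPicard_succ]
    congr 1
    refine intervalIntegral.integral_congr fun τ hτ => ?_
    rw [uIcc_of_le (le_max_left s t)] at hτ
    simp only [hY k (τ - h) (by linarith [hτ.2])]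

end Picard

variable [CompleteSpace E]

namespace IsDelayedSolution

variable {u : E → ℝ → E} {s : ℝ} {x : E} {A : ℝ}

lemma hasDerivWithinAt {h : ℝ} {Y : ℝ → E} (hY : IsDelayedSolution u s x h Y)
    (hu : Continuous (Function.uncurry u)) {t : ℝ} (ht : s ≤ t) :
    HasDerivWithinAt Y (u (Y (t - h)) t) (Ici t) t := by
  have hg : Continuous fun τ => u (Y (τ - h)) τ :=
    hu.comp₂ (hY.continuous.comp (continuous_sub_right h)) continuous_id
  refine (((hg.integral_hasStrictDerivAt s t).hasDerivAt).const_add x).hasDerivWithinAt.congr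
    (fun r hr => hY.eq_integral_of_le (ht.trans hr)) (hY.eq_integral_of_le ht)

theorem exists_pos_norm_sub_le (hu : Continuous (Function.uncurry u))
    (hA : ∀ y t, ‖u y t‖ ≤ A) {M : ℝ} (hM : 0 ≤ M) (hLL : LogLipschitzWith M u) (t : ℝ)
    {ε : ℝ} (hε : 0 < ε) :
    ∃ η > 0, ∀ {h₁ h₂ : ℝ} {Y₁ Y₂ : ℝ → E}, 0 ≤ h₁ → 0 ≤ h₂ → A * (h₁ + h₂) ≤ η →
      IsDelayedSolution u s x h₁ Y₁ → IsDelayedSolution u s x h₂ Y₂ → ‖Y₁ t - Y₂ t‖ ≤ ε := by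
  rcases le_total t s with hts | hst
  · refine ⟨1, one_pos, fun _ _ _ hY₁ hY₂ => ?_⟩
    rw [hY₁.eq_of_le hts, hY₂.eq_of_le hts, sub_self, norm_zero]
    exact hε.le
  obtain ⟨η, hη, hsmall⟩ := exists_pos_norm_add_le_of_osgood (E := E) hM hst hε
  refine ⟨η, hη, fun {h₁ h₂ Y₁ Y₂} hh₁ hh₂ hδ hY₁ hY₂ => ?_⟩
  have hA0 : 0 ≤ A := (norm_nonneg _).trans (hA x s)
  have hdelay : ∀ {h : ℝ} {Y : ℝ → E}, 0 ≤ h → IsDelayedSolution u s x h Y →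
      ∀ τ, ‖Y (τ - h) - Y τ‖ ≤ A * h := fun {h _} hh hY τ => by
    simpa [abs_of_nonneg hh] using hY.norm_sub_le hA hu (τ - h) τ
  have hbound : ∀ τ ∈ Ico s t, 0 < ‖Y₁ τ - Y₂ τ‖ + A * (h₁ + h₂) →
      ‖Y₁ τ - Y₂ τ‖ + A * (h₁ + h₂) ≤ 1 → ‖u (Y₁ (τ - h₁)) τ - u (Y₂ (τ - h₂)) τ‖ ≤
        M * logModulus (‖Y₁ τ - Y₂ τ‖ + A * (h₁ + h₂)) := by
    refine fun τ _ he0 he1 => hLL τ _ _ _ he0 he1 ?_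
    calc ‖Y₁ (τ - h₁) - Y₂ (τ - h₂)‖
        = ‖(Y₁ τ - Y₂ τ) + (Y₁ (τ - h₁) - Y₁ τ) - (Y₂ (τ - h₂) - Y₂ τ)‖ := by abel_nf
      _ ≤ ‖Y₁ τ - Y₂ τ‖ + ‖Y₁ (τ - h₁) - Y₁ τ‖ + ‖Y₂ (τ - h₂) - Y₂ τ‖ :=
        (_root_.norm_sub_le _ _).trans (by gcongr; exact norm_add_le _ _)
      _ ≤ ‖Y₁ τ - Y₂ τ‖ + A * (h₁ + h₂) := by
        linarith [hdelay hh₁ hY₁ τ, hdelay hh₂ hY₂ τ]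
  have := hsmall (f := Y₁ - Y₂) (hY₁.continuous.sub hY₂.continuous).continuousOn
    (fun τ hτ => (hY₁.hasDerivWithinAt hu hτ.1).sub (hY₂.hasDerivWithinAt hu hτ.1)) hbound
    (by simpa [hY₁.eq_of_le le_rfl, hY₂.eq_of_le le_rfl] using hδ)
  simp only [Pi.sub_apply] at this
  nlinarith [mul_nonneg hA0 (add_nonneg hh₁ hh₂)]

end IsDelayedSolution

section Existence

variable {u : E → ℝ → E} {M A : ℝ}

theorem exists_isDelayedSolution_zero (hu : Continuous (Function.uncurry u))
    (hA : ∀ y t, ‖u y t‖ ≤ A) (hM : 0 ≤ M) (hLL : LogLipschitzWith M u) (s : ℝ) (x : E) :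
    ∃ X, IsDelayedSolution u s x 0 X := by
  have hpos : ∀ n : ℕ, 0 < 1 / ((n : ℝ) + 1) := fun n => Nat.one_div_pos_of_nat
  choose Y hY using fun n : ℕ => exists_isDelayedSolution (s := s) (x := x) hu (hpos n)
  have hh : Tendsto (fun n : ℕ => 1 / ((n : ℝ) + 1)) atTop (𝓝 0) :=
    tendsto_one_div_add_atTop_nhds_zero_nat
  have hCauchy : ∀ t, CauchySeq fun n => Y n t := fun t => by
    refine Metric.cauchySeq_iff'.2 fun ε hε => ?_
    obtain ⟨η, hη, hclose⟩ :=
      IsDelayedSolution.exists_pos_norm_sub_le (x := x) hu hA hM hLL t (half_pos hε)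
    obtain ⟨N, hN⟩ := eventually_atTop.1
      ((hh.const_mul A).eventually (gt_mem_nhds (show A * 0 < η / 2 by simpa using half_pos hη)))
    refine ⟨N, fun n hn => ?_⟩
    rw [dist_eq_norm]
    refine (hclose (hpos n).le (hpos N).le ?_ (hY n) (hY N)).trans_lt (half_lt_self hε)
    linarith [hN n hn, hN N le_rfl]
  choose X hX using fun t => cauchySeq_tendsto_of_complete (hCauchy t)
  exact ⟨X, IsDelayedSolution.of_tendsto hu hA hY hh hX⟩

theorem exists_hasDerivAt (hu : Continuous (Function.uncurry u))
    (hA : ∀ y t, ‖u y t‖ ≤ A) (hM : 0 ≤ M) (hLL : LogLipschitzWith M u) (s : ℝ) (x : E) :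
    ∃ X : ℝ → E, X s = x ∧ ∀ t, HasDerivAt X (u (X t) t) t := by
  obtain ⟨Xf, hf⟩ := exists_isDelayedSolution_zero hu hA hM hLL s x
  obtain ⟨Xb, hb⟩ := exists_isDelayedSolution_zero (continuous_timeReversal hu)
    (norm_timeReversal_le hA) hM hLL.timeReversal (-s) x
  -- `Xf = x` on `(-∞, s]` and `Xb (-·) = x` on `[s, ∞)`, so `W` follows each one on its side
  set W : ℝ → E := fun t => Xf t + Xb (-t) - x
  have hWf : ∀ t, s ≤ t → W t = Xf t := fun t ht => by
    simp [W, hb.eq_of_le (neg_le_neg ht)]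
  have hWb : ∀ t, t ≤ s → W t = Xb (-t) := fun t ht => by
    simp [W, hf.eq_of_le ht]
  have hg : Continuous fun τ => u (W τ) τ :=
    hu.comp₂ ((hf.continuous.add (hb.continuous.comp continuous_neg)).sub continuous_const)
      continuous_id
  have hWint : ∀ t, W t = x + ∫ τ in s..t, u (W τ) τ := fun t => by
    rcases le_total s t with hst | hts
    · rw [hWf t hst, hf.eq_integral_of_le hst]
      congr 1
      refine intervalIntegral.integral_congr fun τ hτ => ?_
      rw [uIcc_of_le hst] at hτ
      simp only [sub_zero, hWf τ hτ.1]
    · rw [hWb t hts, hb.eq_integral_of_le (neg_le_neg hts)]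
      congr 1
      calc ∫ σ in -s..-t, timeReversal u (Xb (σ - 0)) σ
          = ∫ σ in -s..-t, -u (W (-σ)) (-σ) := by
            refine intervalIntegral.integral_congr fun σ hσ => ?_
            rw [uIcc_of_le (neg_le_neg hts)] at hσ
            simp only [timeReversal, sub_zero, hWb (-σ) (by linarith [hσ.1]), neg_neg]
        _ = ∫ τ in s..t, u (W τ) τ := by
            rw [intervalIntegral.integral_neg, intervalIntegral.integral_comp_neg
              (fun τ => u (W τ) τ), neg_neg, neg_neg, intervalIntegral.integral_symm, neg_neg]
  refine ⟨W, (hWf s le_rfl).trans (hf.eq_of_le le_rfl), fun t => ?_⟩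
  exact (((hg.integral_hasStrictDerivAt s t).hasDerivAt).const_add x).congr_of_eventuallyEq
    (Eventually.of_forall hWint)

end Existence

end LogLipschitzFlow

theorem logLipschitz_flow_exists_unique_general
    (φ : ℝ → ℝ) (hφ1 : ∀ r : ℝ, 0 < r → r ≤ 1 → φ r = r * (1 - Real.log r))
    (u : EuclideanSpace ℝ (Fin 2) → ℝ → EuclideanSpace ℝ (Fin 2))
    (hu_cont : Continuous fun p : EuclideanSpace ℝ (Fin 2) × ℝ => u p.1 p.2)
    (A : ℝ) (hu_bdd : ∀ x t, ‖u x t‖ ≤ A)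
    (M : ℝ) (hu_LL : ∀ x y t, ‖u x t - u y t‖ ≤ M * φ ‖x - y‖) :
    ∀ (s : ℝ) (x : EuclideanSpace ℝ (Fin 2)),
      ∃! X : ℝ → EuclideanSpace ℝ (Fin 2),
        X s = x ∧ ∀ t : ℝ, HasDerivAt X (u (X t) t) t := by
  intro s x
  have hM : 0 ≤ max M 0 := le_max_right M 0
  have hLL := LogLipschitzFlow.logLipschitzWith_of_norm_sub_le hφ1 hu_LL
  obtain ⟨X, hXs, hX⟩ := LogLipschitzFlow.exists_hasDerivAt hu_cont hu_bdd hM hLL s x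
  exact ⟨X, ⟨hXs, hX⟩, fun Y hY =>
    LogLipschitzFlow.eq_of_hasDerivAt hM hLL hY.2 hX (hY.1.trans hXs.symm)⟩

theorem logLipschitz_flow_exists_unique
    (φ : ℝ → ℝ) (hφ1 : ∀ r : ℝ, 0 < r → r ≤ 1 → φ r = r * (1 - Real.log r))
    (hφ2 : ∀ r : ℝ, 1 < r → φ r = 1)
    (u : EuclideanSpace ℝ (Fin 2) → ℝ → EuclideanSpace ℝ (Fin 2))
    (hu_cont : Continuous fun p : EuclideanSpace ℝ (Fin 2) × ℝ => u p.1 p.2)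
    (A : ℝ) (hu_bdd : ∀ x t, ‖u x t‖ ≤ A)
    (M : ℝ) (hu_LL : ∀ x y t, ‖u x t - u y t‖ ≤ M * φ ‖x - y‖) :
    ∀ (s : ℝ) (x : EuclideanSpace ℝ (Fin 2)),
      ∃! X : ℝ → EuclideanSpace ℝ (Fin 2),
        X s = x ∧ ∀ t : ℝ, HasDerivAt X (u (X t) t) t :=
  logLipschitz_flow_exists_unique_general φ hφ1 u hu_cont A hu_bdd M hu_LL
end

section
/- Let u be a bounded velocity field with |u(x,t)| ≤ A and |u(x,t) − u(y,t)| ≤ M φ(|x−y|) with φ(r) = r(1 − ln r) on (0,1]. Let X_t(x) solve dX_t/dt = u(X_t, t), X_0(x) = x. Then for |t| ≤ T and |x − y| small enough, |X_t(x) − X_t(y)| ≤ e |x − y|^{exp(−M|t|)}; in particular x ↦ X_t(x) is Hölder continuous with exponent exp(−M|t|). -/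
/-!
The distance `r(t) = ‖X_t x - X_t y‖` satisfies `r' ≤ M φ(r) = M r (1 - log r)` as long as
`r ≤ 1`. The comparison equation `r' = K r (1 - log r)` is linear in `log r`, with solution
`r(t) = exp (1 - (1 - log r₀) e^{-Kt}) ≤ e · r₀ ^ e^{-Kt}`. For `K > M` this solution is a
strict barrier for the distance, and letting `K → M` gives the estimate forward in time;
backward times follow by reversing the flow.
-/

open Real Filter Set Topology

/-- The solution of `r' = K r (1 - log r)`, `r 0 = ε`. -/
noncomputable def osgoodBarrier (ε K s : ℝ) : ℝ := exp (1 - (1 - log ε) * exp (-K * s))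

lemma osgoodBarrier_zero {ε : ℝ} (hε : 0 < ε) (K : ℝ) : osgoodBarrier ε K 0 = ε := by
  simp [osgoodBarrier, exp_log hε]

lemma log_osgoodBarrier (ε K s : ℝ) :
    log (osgoodBarrier ε K s) = 1 - (1 - log ε) * exp (-K * s) :=
  log_exp _

lemma hasDerivAt_osgoodBarrier (ε K s : ℝ) :
    HasDerivAt (osgoodBarrier ε K)
      (K * (osgoodBarrier ε K s * (1 - log (osgoodBarrier ε K s)))) s := by
  have h := ((((hasDerivAt_id s).const_mul (-K)).exp.const_mul (1 - log ε)).const_sub 1).exp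
  convert h using 1
  · rfl
  · rw [log_osgoodBarrier, osgoodBarrier, id]
    ring

lemma osgoodBarrier_le_one {ε K s : ℝ} (h : exp (K * s) ≤ 1 - log ε) :
    osgoodBarrier ε K s ≤ 1 := by
  have h1 : 1 ≤ (1 - log ε) * exp (-K * s) := by
    rw [neg_mul, exp_neg, ← div_eq_mul_inv, one_le_div (exp_pos _)]
    exact h
  rw [osgoodBarrier, exp_le_one_iff]
  linarith

lemma osgoodBarrier_le_exp_one_mul_rpow {ε : ℝ} (hε : 0 < ε) (K s : ℝ) :
    osgoodBarrier ε K s ≤ exp 1 * ε ^ exp (-K * s) := by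
  have ha := exp_pos (-K * s)
  calc osgoodBarrier ε K s = exp (1 - exp (-K * s)) * exp (log ε * exp (-K * s)) := by
        rw [osgoodBarrier, ← exp_add]; ring_nf
    _ ≤ exp 1 * exp (log ε * exp (-K * s)) := by gcongr; linarith
    _ = exp 1 * ε ^ exp (-K * s) := by rw [rpow_def_of_pos hε]

section Flow

variable {E : Type*} [NormedAddCommGroup E] [NormedSpace ℝ E]
  {φ : ℝ → ℝ} {u : E → ℝ → E} {M : ℝ} {f g : ℝ → E}

/-- `hbarrier` keeps the barrier below `1`, where the log-Lipschitz bound applies; at a contact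
time the strict inequality `M < K` then makes the barrier grow faster than the distance. -/
lemma norm_sub_le_osgoodBarrier_of_lt
    (hφ : ∀ r : ℝ, 0 < r → r ≤ 1 → φ r = r * (1 - log r)) {K : ℝ}
    (hu : ∀ x y t, ‖x - y‖ ≤ 1 → ‖u x t - u y t‖ ≤ M * φ ‖x - y‖)
    (hM : 0 ≤ M) (hMK : M < K)
    (hf : ∀ t, HasDerivAt f (u (f t) t) t)
    (hg : ∀ t, HasDerivAt g (u (g t) t) t)
    {ε t : ℝ} (hε : 0 < ε) (h0 : ‖f 0 - g 0‖ ≤ ε) (ht : 0 ≤ t)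
    (hbarrier : exp (K * t) ≤ 1 - log ε) :
    ‖f t - g t‖ ≤ osgoodBarrier ε K t := by
  refine image_norm_le_of_norm_deriv_right_lt_deriv_boundary
    (f := fun s => f s - g s) (f' := fun s => u (f s) s - u (g s) s)
    (fun s _ => ((hf s).sub (hg s)).continuousAt.continuousWithinAt)
    (fun s _ => ((hf s).sub (hg s)).hasDerivWithinAt)
    (by rwa [osgoodBarrier_zero hε]) (hasDerivAt_osgoodBarrier ε K) ?_ ⟨ht, le_rfl⟩
  intro s hs hcontact
  set B := osgoodBarrier ε K s
  have hKs : K * s ≤ K * t := mul_le_mul_of_nonneg_left hs.2.le (by linarith)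
  have hB1 : B ≤ 1 := osgoodBarrier_le_one <| (exp_le_exp.2 hKs).trans hbarrier
  have hB0 : 0 < B := exp_pos _
  have hpos : 0 < B * (1 - log B) := mul_pos hB0 (by linarith [log_nonpos hB0.le hB1])
  calc ‖u (f s) s - u (g s) s‖ ≤ M * φ B := hcontact ▸ hu _ _ s (hcontact ▸ hB1)
    _ = M * (B * (1 - log B)) := by rw [hφ B hB0 hB1]
    _ < K * (B * (1 - log B)) := mul_lt_mul_of_pos_right hMK hpos

lemma norm_sub_le_osgoodBarrier
    (hφ : ∀ r : ℝ, 0 < r → r ≤ 1 → φ r = r * (1 - log r))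
    (hu : ∀ x y t, ‖x - y‖ ≤ 1 → ‖u x t - u y t‖ ≤ M * φ ‖x - y‖) (hM : 0 ≤ M)
    (hf : ∀ t, HasDerivAt f (u (f t) t) t)
    (hg : ∀ t, HasDerivAt g (u (g t) t) t)
    {ε t : ℝ} (hε : 0 < ε) (h0 : ‖f 0 - g 0‖ ≤ ε) (ht : 0 ≤ t)
    (hbarrier : exp ((M + 1) * t) ≤ 1 - log ε) :
    ‖f t - g t‖ ≤ osgoodBarrier ε M t := by
  have hnear : ∀ᶠ K in 𝓝[>] M, ‖f t - g t‖ ≤ osgoodBarrier ε K t := by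
    filter_upwards [Ioc_mem_nhdsGT (lt_add_one M)] with K hK
    refine norm_sub_le_osgoodBarrier_of_lt hφ hu hM hK.1 hf hg hε h0 ht ?_
    exact (exp_le_exp.2 <| mul_le_mul_of_nonneg_right hK.2 ht).trans hbarrier
  have hcont : Continuous fun K => osgoodBarrier ε K t := by
    unfold osgoodBarrier; fun_prop
  exact ge_of_tendsto (hcont.tendsto M |>.mono_left nhdsWithin_le_nhds) hnear

lemma norm_sub_le_exp_one_mul_rpow
    (hφ : ∀ r : ℝ, 0 < r → r ≤ 1 → φ r = r * (1 - log r))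
    (hu : ∀ x y t, ‖x - y‖ ≤ 1 → ‖u x t - u y t‖ ≤ M * φ ‖x - y‖) (hM : 0 ≤ M)
    (hf : ∀ t, HasDerivAt f (u (f t) t) t)
    (hg : ∀ t, HasDerivAt g (u (g t) t) t)
    {ε : ℝ} (hε : 0 < ε) (h0 : ‖f 0 - g 0‖ ≤ ε) (t : ℝ)
    (hbarrier : exp ((M + 1) * |t|) ≤ 1 - log ε) :
    ‖f t - g t‖ ≤ exp 1 * ε ^ exp (-M * |t|) := by
  refine le_trans ?_ (osgoodBarrier_le_exp_one_mul_rpow hε M |t|)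
  rcases le_total 0 t with ht | ht
  · rw [abs_of_nonneg ht] at hbarrier ⊢
    exact norm_sub_le_osgoodBarrier hφ hu hM hf hg hε h0 ht hbarrier
  · -- the reversed trajectories `s ↦ f (-s)` follow `-u (·) (-s)`, with the same modulus
    have hu' : ∀ x y s, ‖x - y‖ ≤ 1 → ‖-u x (-s) - -u y (-s)‖ ≤ M * φ ‖x - y‖ := by
      intro x y s hxy
      rw [neg_sub_neg, norm_sub_rev]
      exact hu x y (-s) hxy
    have hrev : ∀ {h : ℝ → E}, (∀ t, HasDerivAt h (u (h t) t) t) →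
        ∀ s, HasDerivAt (fun s => h (-s)) (-u (h (-s)) (-s)) s := fun hh s => by
      simpa [Function.comp_def] using (hh (-s)).scomp s (hasDerivAt_neg s)
    rw [abs_of_nonpos ht] at hbarrier ⊢
    simpa using norm_sub_le_osgoodBarrier hφ hu' hM (hrev hf) (hrev hg) hε
      (by simpa using h0) (neg_nonneg.2 ht) hbarrier

end Flow

theorem flow_holder_continuity_general
    (φ : ℝ → ℝ) (hφ1 : ∀ r : ℝ, 0 < r → r ≤ 1 → φ r = r * (1 - Real.log r))
    (u : EuclideanSpace ℝ (Fin 2) → ℝ → EuclideanSpace ℝ (Fin 2))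
    (M : ℝ) (hM : 0 ≤ M)
    (hu_LL : ∀ x y t, ‖x - y‖ ≤ 1 → ‖u x t - u y t‖ ≤ M * φ ‖x - y‖)
    (X : EuclideanSpace ℝ (Fin 2) → ℝ → EuclideanSpace ℝ (Fin 2))
    (hX0 : ∀ x, X x 0 = x)
    (hX : ∀ x t, HasDerivAt (X x) (u (X x t) t) t) :
    ∀ T : ℝ, 0 < T → ∃ δ : ℝ, 0 < δ ∧
      ∀ (t : ℝ), |t| ≤ T → ∀ x y, ‖x - y‖ < δ →
        ‖X x t - X y t‖ ≤ Real.exp 1 * ‖x - y‖ ^ Real.exp (-M * |t|) := by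
  intro T _
  refine ⟨exp (1 - exp ((M + 1) * T)), exp_pos _, fun t ht x y hxy => ?_⟩
  rcases eq_or_ne x y with rfl | hne
  · simp
  have hε : 0 < ‖x - y‖ := norm_pos_iff.2 (sub_ne_zero.2 hne)
  have hbarrier : exp ((M + 1) * |t|) ≤ 1 - log ‖x - y‖ := by
    have hlog : log ‖x - y‖ < 1 - exp ((M + 1) * T) := (log_lt_iff_lt_exp hε).2 hxy
    have hexp : exp ((M + 1) * |t|) ≤ exp ((M + 1) * T) := exp_le_exp.2 (by gcongr)
    linarith
  exact norm_sub_le_exp_one_mul_rpow hφ1 hu_LL hM (hX x) (hX y) hε (by rw [hX0, hX0]) t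
    hbarrier

theorem flow_holder_continuity
    (φ : ℝ → ℝ) (hφ1 : ∀ r : ℝ, 0 < r → r ≤ 1 → φ r = r * (1 - Real.log r))
    (u : EuclideanSpace ℝ (Fin 2) → ℝ → EuclideanSpace ℝ (Fin 2))
    (A : ℝ) (hu_bdd : ∀ x t, ‖u x t‖ ≤ A)
    (M : ℝ) (hM : 0 ≤ M)
    (hu_LL : ∀ x y t, ‖x - y‖ ≤ 1 → ‖u x t - u y t‖ ≤ M * φ ‖x - y‖)
    (X : EuclideanSpace ℝ (Fin 2) → ℝ → EuclideanSpace ℝ (Fin 2))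
    (hX0 : ∀ x, X x 0 = x)
    (hX : ∀ x t, HasDerivAt (X x) (u (X x t) t) t) :
    ∀ T : ℝ, 0 < T → ∃ δ : ℝ, 0 < δ ∧
      ∀ (t : ℝ), |t| ≤ T → ∀ x y, ‖x - y‖ < δ →
        ‖X x t - X y t‖ ≤ Real.exp 1 * ‖x - y‖ ^ Real.exp (-M * |t|) :=
  flow_holder_continuity_general φ hφ1 u M hM hu_LL X hX0 hX
end

section
/- Under the same hypotheses, the map t ↦ ω(·, t) = ω₀ ∘ X_t^{-1} is continuous from ℝ to L^∞(Ω) equipped with the weak-* topology, i.e., for every f ∈ L¹(Ω), t ↦ ∫_Ω ω(x,t) f(x) dx is continuous. -/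
open MeasureTheory Set
open scoped ENNReal BoundedContinuousFunction

/-!
Pulling back by the measure-preserving map `X t`, which is injective on `Ω`, turns the
integral into `∫_Ω ω₀ · (f ∘ X t)`, so the transport moves onto the `L¹` test function.
For bounded continuous `f` continuity in `t` is dominated convergence. A general `f ∈ L¹` is
uniformly approximated: since every `X t` preserves the measure,
`|∫ ω₀ · (f ∘ X t) - ∫ ω₀ · (g ∘ X t)| ≤ ‖ω₀‖_∞ ‖f - g‖₁` uniformly in `t`, and
bounded continuous functions are dense in `L¹` of a finite measure on a metric space.
-/

namespace MeasureTheory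

theorem MemLp.ae_norm_le_toReal_eLpNorm_top {α E : Type*} [MeasurableSpace α] {μ : Measure α}
    [NormedAddCommGroup E] {f : α → E} (hf : MemLp f ∞ μ) :
    ∀ᵐ x ∂μ, ‖f x‖ ≤ (eLpNorm f ∞ μ).toReal := by
  have hfin : eLpNormEssSup f μ ≠ ∞ := eLpNorm_exponent_top (f := f) ▸ hf.eLpNorm_ne_top
  filter_upwards [ae_le_eLpNormEssSup (f := f) (μ := μ)] with x hx
  rw [eLpNorm_exponent_top, ← toReal_enorm]
  exact ENNReal.toReal_mono hfin hx

section ChangeOfVariables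

variable {α β E : Type*} [MeasurableSpace α] [StandardBorelSpace α] [NormedAddCommGroup E]
  [NormedSpace ℝ E] {μ : Measure α} {s : Set α}

theorem MeasurePreserving.setIntegral_comp_of_injOn [MeasurableSpace β]
    [MeasurableSpace.CountablySeparated β] {ν : Measure β} {T : α → β}
    (hT : MeasurePreserving T (μ.restrict s) ν) (hs : MeasurableSet s) (hinj : InjOn T s)
    (g : β → E) : ∫ x in s, g (T x) ∂μ = ∫ y, g y ∂ν := by
  have := hs.standardBorel
  have hemb : MeasurableEmbedding (T ∘ Subtype.val : s → β) :=
    (hT.measurable.comp measurable_subtype_coe).measurableEmbedding hinj.injective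
  have hmp : MeasurePreserving (T ∘ Subtype.val : s → β) (μ.comap Subtype.val) ν := by
    refine ⟨hemb.measurable, ?_⟩
    rw [← Measure.map_map hT.measurable measurable_subtype_coe, map_comap_subtype_coe hs,
      hT.map_eq]
  rw [← integral_subtype_comap hs]
  exact hmp.integral_comp hemb g

theorem MeasurePreserving.setIntegral_comp_leftInvOn {T S : α → α}
    (hT : MeasurePreserving T (μ.restrict s) (μ.restrict s)) (hs : MeasurableSet s)
    (hinj : InjOn T s) (hST : LeftInvOn S T s) (F : α → α → E) :
    ∫ y in s, F (S y) y ∂μ = ∫ x in s, F x (T x) ∂μ := by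
  rw [← hT.setIntegral_comp_of_injOn hs hinj]
  refine setIntegral_congr_fun hs fun x hx => ?_
  rw [hST hx]

end ChangeOfVariables

section WeakStarContinuity

variable {α β P : Type*} [MeasurableSpace α] [MeasurableSpace β] [TopologicalSpace P]
  [FirstCountableTopology P]
  {μ : Measure α} {ν : Measure β} {ω : α → ℝ} {C : ℝ}

theorem MeasurePreserving.norm_integral_mul_comp_le {T : α → β} (hT : MeasurePreserving T μ ν)
    (hC : ∀ᵐ x ∂μ, ‖ω x‖ ≤ C) {h : β → ℝ} (hh : Integrable h ν) :
    ‖∫ x, ω x * h (T x) ∂μ‖ ≤ C * ∫ y, ‖h y‖ ∂ν := by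
  have hhT : Integrable (fun x => ‖h (T x)‖) μ := (hT.integrable_comp_of_integrable hh).norm
  calc ‖∫ x, ω x * h (T x) ∂μ‖
      ≤ ∫ x, C * ‖h (T x)‖ ∂μ := by
        refine norm_integral_le_of_norm_le (hhT.const_mul C) ?_
        filter_upwards [hC] with x hx
        rw [norm_mul]
        exact mul_le_mul_of_nonneg_right hx (norm_nonneg _)
    _ = C * ∫ y, ‖h y‖ ∂ν := by
        rw [integral_const_mul, ← hT.map_eq,
          integral_map hT.aemeasurable (hT.map_eq ▸ hh.norm.aestronglyMeasurable)]

theorem continuous_integral_mul_comp_of_boundedContinuous [IsFiniteMeasure μ]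
    [TopologicalSpace β] [OpensMeasurableSpace β] (hω : AEStronglyMeasurable ω μ)
    (hC : ∀ᵐ x ∂μ, ‖ω x‖ ≤ C) {T : P → α → β} (hTm : ∀ p, Measurable (T p))
    (hTc : ∀ᵐ x ∂μ, Continuous fun p => T p x) (g : β →ᵇ ℝ) :
    Continuous fun p => ∫ x, ω x * g (T p x) ∂μ := by
  refine continuous_of_dominated (bound := fun _ => C * ‖g‖)
    (fun p => hω.mul (g.continuous.measurable.comp (hTm p)).aestronglyMeasurable)
    (fun p => ?_) (integrable_const _) ?_
  · filter_upwards [hC] with x hx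
    rw [norm_mul]
    exact mul_le_mul hx (g.norm_coe_le_norm _) (norm_nonneg _) ((norm_nonneg _).trans hx)
  · filter_upwards [hTc] with x hx
    exact continuous_const.mul (g.continuous.comp hx)

theorem continuous_integral_mul_comp [IsFiniteMeasure μ] [TopologicalSpace β]
    [TopologicalSpace.PseudoMetrizableSpace β] [BorelSpace β] [Measure.WeaklyRegular ν]
    (hω : MemLp ω ∞ μ) {T : P → α → β} (hT : ∀ p, MeasurePreserving (T p) μ ν)
    (hTc : ∀ᵐ x ∂μ, Continuous fun p => T p x) {f : β → ℝ} (hf : Integrable f ν) :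
    Continuous fun p => ∫ x, ω x * f (T p x) ∂μ := by
  set C := (eLpNorm ω ∞ μ).toReal
  have hC := hω.ae_norm_le_toReal_eLpNorm_top
  refine continuous_of_uniform_approx_of_continuous fun u hu => ?_
  obtain ⟨ε, hε, hεu⟩ := Metric.mem_uniformity_dist.1 hu
  obtain ⟨g, hfg, hg⟩ := hf.exists_boundedContinuous_integral_sub_le
    (show 0 < ε / (C + 1) by positivity)
  refine ⟨_, continuous_integral_mul_comp_of_boundedContinuous hω.1 hC
    (fun p => (hT p).measurable) hTc g, fun p => hεu ?_⟩
  have hint : ∀ h : β → ℝ, Integrable h ν → Integrable (fun x => ω x * h (T p x)) μ :=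
    fun h hh => ((hT p).integrable_comp_of_integrable hh).bdd_mul hω.1 hC
  rw [dist_eq_norm, ← integral_sub (hint f hf) (hint g hg)]
  simp_rw [← mul_sub]
  calc ‖∫ x, ω x * (f (T p x) - g (T p x)) ∂μ‖
      ≤ C * ∫ y, ‖f y - g y‖ ∂ν := (hT p).norm_integral_mul_comp_le hC (hf.sub hg)
    _ ≤ C * (ε / (C + 1)) := by gcongr
    _ < ε := by
        rw [mul_div_assoc', div_lt_iff₀ (by positivity)]
        nlinarith

end WeakStarContinuity

end MeasureTheory

theorem transported_vorticity_weakstar_continuous_general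
    (Ω : Set (EuclideanSpace ℝ (Fin 2))) (hΩ : Bornology.IsBounded Ω)
    (hΩmeas : MeasurableSet Ω)
    (ω₀ : EuclideanSpace ℝ (Fin 2) → ℝ)
    (hω₀ : MemLp ω₀ ⊤ (volume.restrict Ω))
    (X Xinv : ℝ → EuclideanSpace ℝ (Fin 2) → EuclideanSpace ℝ (Fin 2))
    (hXcont : ContinuousOn (fun q : EuclideanSpace ℝ (Fin 2) × ℝ => X q.2 q.1)
      (closure Ω ×ˢ Set.univ))
    (hXmp : ∀ t : ℝ, MeasurePreserving (X t) (volume.restrict Ω) (volume.restrict Ω))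
    (hXbij : ∀ t : ℝ, Set.BijOn (X t) Ω Ω)
    (hXinv : ∀ t : ℝ, ∀ x ∈ Ω, Xinv t (X t x) = x ∧ X t (Xinv t x) = x) :
    ∀ f : EuclideanSpace ℝ (Fin 2) → ℝ, Integrable f (volume.restrict Ω) →
      Continuous (fun t : ℝ => ∫ x in Ω, ω₀ (Xinv t x) * f x) := by
  intro f hf
  have : IsFiniteMeasure (volume.restrict Ω) := isFiniteMeasure_restrict.2 hΩ.measure_lt_top.ne
  have hpullback : ∀ t, ∫ x in Ω, ω₀ (Xinv t x) * f x = ∫ x in Ω, ω₀ x * f (X t x) :=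
    fun t => (hXmp t).setIntegral_comp_leftInvOn hΩmeas (hXbij t).injOn
      (fun x hx => (hXinv t x hx).1) fun x y => ω₀ x * f y
  simp_rw [hpullback]
  refine continuous_integral_mul_comp hω₀ hXmp ?_ hf
  filter_upwards [ae_restrict_mem hΩmeas] with x hx
  exact hXcont.comp_continuous (Continuous.prodMk_right x) fun t => ⟨subset_closure hx, trivial⟩

theorem transported_vorticity_weakstar_continuous
    (Ω : Set (EuclideanSpace ℝ (Fin 2))) (hΩ : Bornology.IsBounded Ω)
    (hΩmeas : MeasurableSet Ω)
    (ω₀ : EuclideanSpace ℝ (Fin 2) → ℝ)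
    (hω₀ : MemLp ω₀ ⊤ (volume.restrict Ω))
    (X Xinv : ℝ → EuclideanSpace ℝ (Fin 2) → EuclideanSpace ℝ (Fin 2))
    (hXcont : ContinuousOn (fun q : EuclideanSpace ℝ (Fin 2) × ℝ => X q.2 q.1)
      (closure Ω ×ˢ Set.univ))
    (hXmp : ∀ t : ℝ, MeasurePreserving (X t) (volume.restrict Ω) (volume.restrict Ω))
    (hXbij : ∀ t : ℝ, Set.BijOn (X t) Ω Ω)
    (hXinv : ∀ t : ℝ, ∀ x ∈ Ω, Xinv t (X t x) = x ∧ X t (Xinv t x) = x)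
    (hX0 : ∀ x ∈ Ω, X 0 x = x) :
    ∀ f : EuclideanSpace ℝ (Fin 2) → ℝ, Integrable f (volume.restrict Ω) →
      Continuous (fun t : ℝ => ∫ x in Ω, ω₀ (Xinv t x) * f x) :=
  transported_vorticity_weakstar_continuous_general Ω hΩ hΩmeas ω₀ hω₀ X Xinv hXcont hXmp hXbij
    hXinv
end
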